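/- Let R be a commutative local ring with m = (2) ≠ 0, m² = 0, and suppose the category F(R) of finitely generated free R-modules carries a triangulated structure with identity translation functor in which R →2 R →2 R →2 R is an exact triangle. Then F(R) admits no nontrivial exact functor to or from the stable homotopy category (or any topological triangulated category): every such exact functor sends every object to a zero object. -/

import Mathlib

/-!
Call `X` exotic if `X →2 X →2 X →2s ΣX` is distinguished. If `X` is exotic and `η` is a Hopf
map for `X` with cone `X →i C →q ΣX` of `2`, comparing the two triangles identifies `i` and `q`
with `2` and `2s`, so `2·1_X` is conjugate to `qηi = 2·(s ≫ 2η) = 0`; exactness of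
`X →2 X →2 X` then forces `1_X = 0`. Exact functors preserve exotic objects and Hopf maps.
In `F(R)` the identity shift makes `R` exotic, and every object, a finite product of copies
of `R`, is exotic as well.
-/

open CategoryTheory Limits Pretriangulated

/-- The category of finitely generated free `R`-modules. -/
abbrev FGFree (R : Type*) [CommRing R] :=
  CategoryTheory.ObjectProperty.FullSubcategory (fun M : ModuleCat R => Module.Free R M ∧ Module.Finite R M)

/-- `R` as an object of `FGFree R`. -/
abbrev FGFree.R (R : Type*) [CommRing R] : FGFree R :=
  ⟨ModuleCat.of R R, inferInstanceAs (Module.Free R R), inferInstanceAs (Module.Finite R R)⟩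

/-- A Hopf map for `A`: a morphism `η : ΣA ⟶ A` with `2η = 0` such that for some exact
triangle `A →2 A →i C →q ΣA` one has `iηq = 2·1_C`. -/
def IsHopfMap {T : Type*} [Category T] [Preadditive T] [HasZeroObject T]
    [HasShift T ℤ] [∀ n : ℤ, (shiftFunctor T n).Additive] [Pretriangulated T]
    (A : T) (η : A⟦(1 : ℤ)⟧ ⟶ A) : Prop :=
  (2 : ℤ) • η = 0 ∧
  ∃ (Cone : T) (i : A ⟶ Cone) (q : Cone ⟶ A⟦(1 : ℤ)⟧),
    Triangle.mk ((2 : ℤ) • 𝟙 A) i q ∈ (distTriang T) ∧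
      q ≫ η ≫ i = (2 : ℤ) • 𝟙 Cone

section Exotic

variable {C : Type*} [Category C] [Preadditive C] [HasZeroObject C]
    [HasShift C ℤ] [∀ n : ℤ, (shiftFunctor C n).Additive] [Pretriangulated C]

def IsExotic (X : C) : Prop :=
  ∃ s : X ⟶ X⟦(1 : ℤ)⟧,
    Triangle.mk ((2 : ℤ) • 𝟙 X) ((2 : ℤ) • 𝟙 X) ((2 : ℤ) • s) ∈ distTriang C

lemma IsExotic.of_iso {X Y : C} (hX : IsExotic X) (φ : X ≅ Y) : IsExotic Y := by
  obtain ⟨s, hs⟩ := hX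
  refine ⟨φ.inv ≫ s ≫ φ.hom⟦(1 : ℤ)⟧', isomorphic_distinguished _ hs _ ?_⟩
  refine Triangle.isoMk _ _ φ.symm φ.symm φ.symm ?_ ?_ ?_
  · simp [Triangle.mk]
  · simp [Triangle.mk]
  · simp [Triangle.mk, ← Functor.map_comp]

lemma IsExotic.pi {J : Type*} {X : J → C} [HasProduct X] [HasProduct fun j => (X j)⟦(1 : ℤ)⟧]
    (hX : ∀ j, IsExotic (X j)) : IsExotic (∏ᶜ X) := by
  choose s hs using hX
  refine ⟨Limits.Pi.map s ≫ inv (piComparison (shiftFunctor C (1 : ℤ)) X),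
    isomorphic_distinguished _ (productTriangle_distinguished
      (fun j => Triangle.mk' (X j) (X j) (X j) _ _ _) hs) _ ?_⟩
  refine Triangle.isoMk _ _ (Iso.refl _) (Iso.refl _) (Iso.refl _) ?_ ?_ ?_
  · exact Limits.Pi.hom_ext _ _ fun j => by simp [Triangle.mk, productTriangle]
  · exact Limits.Pi.hom_ext _ _ fun j => by simp [Triangle.mk, productTriangle]
  · have h2s : (2 : ℤ) • Limits.Pi.map s = Limits.Pi.map fun j => (2 : ℤ) • s j :=
      Limits.Pi.hom_ext _ _ fun j => by simp
    simp [Triangle.mk, productTriangle, h2s]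

lemma IsExotic.two_smul_id_eq_zero {X : C} (hX : IsExotic X) {η : X⟦(1 : ℤ)⟧ ⟶ X}
    (hη : IsHopfMap X η) : (2 : ℤ) • 𝟙 X = 0 := by
  obtain ⟨s, hs⟩ := hX
  obtain ⟨h2η, Cn, i, q, hT, hqηi⟩ := hη
  obtain ⟨c, hic, hqc⟩ : ∃ c : Cn ⟶ X, i ≫ c = 𝟙 X ≫ ((2 : ℤ) • 𝟙 X) ∧
      q ≫ (𝟙 X)⟦(1 : ℤ)⟧' = c ≫ ((2 : ℤ) • s) :=
    complete_distinguished_triangle_morphism _ _ hT hs (𝟙 X) (𝟙 X) (by simp [Triangle.mk])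
  have : IsIso c := isIso₃_of_isIso₁₂ ⟨𝟙 X, 𝟙 X, c, by simp [Triangle.mk], hic, hqc⟩ hT hs
    (IsIso.id X) (IsIso.id X)
  have hq : q = (2 : ℤ) • (c ≫ s) := by simpa [Triangle.mk, Preadditive.comp_zsmul] using hqc
  have hi : i ≫ c = (2 : ℤ) • 𝟙 X := by simpa [Triangle.mk] using hic
  calc (2 : ℤ) • 𝟙 X = inv c ≫ ((2 : ℤ) • 𝟙 Cn) ≫ c := by simp
    _ = inv c ≫ (q ≫ η ≫ i) ≫ c := by rw [hqηi]
    _ = (2 : ℤ) • (s ≫ ((2 : ℤ) • η)) := by simp [hq, hi]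
    _ = 0 := by rw [h2η, comp_zero, smul_zero]

lemma IsExotic.isZero_of_two_smul_id_eq_zero {X : C} (hX : IsExotic X)
    (h2 : (2 : ℤ) • 𝟙 X = 0) : IsZero X := by
  obtain ⟨s, hs⟩ := hX
  obtain ⟨g, hg⟩ := Triangle.coyoneda_exact₂ _ hs (𝟙 X) (Category.id_comp _ |>.trans h2)
  rw [IsZero.iff_id_eq_zero, hg]
  exact (congrArg _ h2).trans comp_zero

lemma IsExotic.isZero_of_isHopfMap {X : C} (hX : IsExotic X) {η : X⟦(1 : ℤ)⟧ ⟶ X}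
    (hη : IsHopfMap X η) : IsZero X :=
  hX.isZero_of_two_smul_id_eq_zero (hX.two_smul_id_eq_zero hη)

variable {D : Type*} [Category D] [Preadditive D] [HasZeroObject D]
    [HasShift D ℤ] [∀ n : ℤ, (shiftFunctor D n).Additive] [Pretriangulated D]
    (F : C ⥤ D) [F.CommShift ℤ] [F.IsTriangulated]

lemma IsExotic.map {X : C} (hX : IsExotic X) : IsExotic (F.obj X) := by
  obtain ⟨s, hs⟩ := hX
  refine ⟨F.map s ≫ (F.commShiftIso (1 : ℤ)).hom.app X,
    isomorphic_distinguished _ (F.map_distinguished _ hs) _ ?_⟩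
  refine Triangle.isoMk _ _ (Iso.refl _) (Iso.refl _) (Iso.refl _) ?_ ?_ ?_ <;>
    simp [Triangle.mk, Functor.mapTriangle]

lemma IsHopfMap.map {Y : C} {η : Y⟦(1 : ℤ)⟧ ⟶ Y} (hη : IsHopfMap Y η) :
    IsHopfMap (F.obj Y) ((F.commShiftIso (1 : ℤ)).inv.app Y ≫ F.map η) := by
  obtain ⟨h2η, Cn, i, q, hT, hqηi⟩ := hη
  refine ⟨?_, F.obj Cn, F.map i, F.map q ≫ (F.commShiftIso (1 : ℤ)).hom.app Y, ?_, ?_⟩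
  · rw [← Preadditive.comp_zsmul, ← F.map_zsmul, h2η, F.map_zero, comp_zero]
  · refine isomorphic_distinguished _ (F.map_distinguished _ hT) _ ?_
    refine Triangle.isoMk _ _ (Iso.refl _) (Iso.refl _) (Iso.refl _) ?_ ?_ ?_ <;>
      simp [Triangle.mk, Functor.mapTriangle]
  · simp only [Category.assoc, Iso.hom_inv_id_app_assoc, ← F.map_comp, hqηi, F.map_zsmul,
      F.map_id]

end Exotic

namespace FGFree

variable {R : Type*} [CommRing R]

noncomputable def basisBicone (X : FGFree R) {ι : Type*} (b : Module.Basis ι R X.obj) :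
    Bicone fun _ : ι => FGFree.R R where
  pt := X
  π j := ObjectProperty.homMk (ModuleCat.ofHom (b.coord j))
  ι j := ObjectProperty.homMk (ModuleCat.ofHom (LinearMap.toSpanSingleton R X.obj (b j)))
  ι_π j j' := by
    split_ifs with h
    · subst h; ext; simp
    · ext; simp [h]

lemma basisBicone_total (X : FGFree R) {ι : Type*} [Fintype ι] (b : Module.Basis ι R X.obj) :
    ∑ j, (ObjectProperty.homMk (ModuleCat.ofHom (b.coord j)) : X ⟶ FGFree.R R) ≫
      ObjectProperty.homMk (ModuleCat.ofHom (LinearMap.toSpanSingleton R X.obj (b j))) = 𝟙 X := by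
  refine (ObjectProperty.ι _).map_injective ?_
  rw [Functor.map_sum, CategoryTheory.Functor.map_id]
  ext x
  simp

noncomputable def basisBiconeIsBilimit (X : FGFree R) {ι : Type*} [Fintype ι]
    (b : Module.Basis ι R X.obj) :
    (basisBicone X b).IsBilimit :=
  isBilimitOfTotal _ (basisBicone_total X b)

variable [HasZeroObject (FGFree R)] [HasShift (FGFree R) ℤ]
    [∀ n : ℤ, (shiftFunctor (FGFree R) n).Additive] [Pretriangulated (FGFree R)]

lemma isExotic_of_isExotic_R (hR : IsExotic (FGFree.R R)) (X : FGFree R) : IsExotic X := by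
  have := X.property.1
  have := X.property.2
  let b := Module.Free.chooseBasis R X.obj
  exact (IsExotic.pi fun _ => hR).of_iso
    ((limit.isLimit _).conePointUniqueUpToIso (basisBiconeIsBilimit X b).isLimit)

end FGFree

/-- Suppose `R` is a commutative local ring with `m = (2) ≠ 0`, `m² = 0`, and the category
`F(R)` of finitely generated free `R`-modules carries a triangulated structure whose
translation functor is (isomorphic to) the identity and in which `R →2 R →2 R →2 R` is an
exact triangle.  Then every exact functor from `F(R)` to a topological triangulated
category `D` (one in which every object has a Hopf map, e.g. the stable homotopy category)
is trivial, and so is every exact functor from `D` to `F(R)`. -/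
theorem stmt_17 (R : Type*) [CommRing R] [IsLocalRing R]
    (hm : IsLocalRing.maximalIdeal R = Ideal.span {(2 : R)})
    (hne : IsLocalRing.maximalIdeal R ≠ ⊥)
    (hsq : IsLocalRing.maximalIdeal R ^ 2 = ⊥)
    [HasZeroObject (FGFree R)] [HasShift (FGFree R) ℤ]
    [∀ n : ℤ, (shiftFunctor (FGFree R) n).Additive] [Pretriangulated (FGFree R)]
    [IsTriangulated (FGFree R)]
    (e : shiftFunctor (FGFree R) (1 : ℤ) ≅ 𝟭 (FGFree R))
    (hR : Triangle.mk ((2 : ℤ) • 𝟙 (FGFree.R R)) ((2 : ℤ) • 𝟙 (FGFree.R R))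
        (((2 : ℤ) • 𝟙 (FGFree.R R)) ≫ e.inv.app (FGFree.R R)) ∈ distTriang (FGFree R))
    (D : Type*) [Category D] [Preadditive D] [HasZeroObject D] [HasShift D ℤ]
    [∀ n : ℤ, (shiftFunctor D n).Additive] [Pretriangulated D] [IsTriangulated D]
    (hD : ∀ Y : D, ∃ η : Y⟦(1 : ℤ)⟧ ⟶ Y, IsHopfMap Y η) :
    (∀ (F : FGFree R ⥤ D) [F.CommShift ℤ] [F.IsTriangulated],
      ∀ X : FGFree R, IsZero (F.obj X)) ∧
    (∀ (G : D ⥤ FGFree R) [G.CommShift ℤ] [G.IsTriangulated],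
      ∀ Y : D, IsZero (G.obj Y)) := by
  have hexotic : ∀ X : FGFree R, IsExotic X :=
    FGFree.isExotic_of_isExotic_R ⟨e.inv.app _, by simpa [Preadditive.zsmul_comp] using hR⟩
  refine ⟨fun F _ _ X => ?_, fun G _ _ Y => ?_⟩
  · obtain ⟨η, hη⟩ := hD (F.obj X)
    exact ((hexotic X).map F).isZero_of_isHopfMap hη
  · obtain ⟨η, hη⟩ := hD Y
    exact (hexotic (G.obj Y)).isZero_of_isHopfMap (hη.map G)
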